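/- Suppose the simple root α is the only simple root in its W-orbit R_α = W·α. Then the closure of K_α = ∪_{w∈W} w(F_α) equals the union of hyperplanes ∪_{γ ∈ R_α ∩ R₊} H_γ. -/

import Mathlib

open scoped RealInnerProductSpace
open Metric Set

variable {V : Type*} [NormedAddCommGroup V] [InnerProductSpace ℝ V] [FiniteDimensional ℝ V]

/-- Orthogonal reflection in the hyperplane orthogonal to the unit vector `α`. -/
noncomputable def sRefl (α x : V) : V := x - (2 * ⟪α, x⟫) • α

/-- The one-sided reflection `r_α`: identity on `{α·x ≥ 0}`, reflection on `{α·x ≤ 0}`,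
given by the concise formula `r_α(x) = x + 2(α·x)⁻ α`. -/
noncomputable def rRefl (α x : V) : V := x + (2 * max (-⟪α, x⟫) 0) • α

/-- `R` is a reduced root system of unit vectors. -/
def IsRootSystem (R : Finset V) : Prop :=
  (∀ α ∈ R, ‖α‖ = 1) ∧
  (∀ α ∈ R, ∀ t : ℝ, t • α ∈ R → t = 1 ∨ t = -1) ∧
  (∀ α ∈ R, ∀ β ∈ R, sRefl α β ∈ R)

/-- `Rpos` is a positive subsystem of `R`: the roots having positive inner product
against some vector `u` lying on no root hyperplane. -/
def IsPositiveSystem (R Rpos : Finset V) : Prop :=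
  ∃ u : V, (∀ β ∈ R, ⟪β, u⟫ ≠ 0) ∧ ∀ β, β ∈ Rpos ↔ β ∈ R ∧ 0 < ⟪β, u⟫

/-- `S` is the simple system associated with the positive subsystem `Rpos`. -/
def IsSimpleSystem (Rpos S : Finset V) : Prop :=
  S ⊆ Rpos ∧ LinearIndependent ℝ (fun x : (S : Set V) => (x : V)) ∧
  Submodule.span ℝ (S : Set V) = Submodule.span ℝ (Rpos : Set V) ∧
  ∀ β ∈ Rpos, ∃ c : V → ℝ, (∀ α ∈ S, 0 ≤ c α) ∧ β = ∑ α ∈ S, c α • α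

/-- The reflection group `W` generated by the reflections `s_α`, `α ∈ R`. -/
noncomputable def weylGroup (R : Finset V) : Subgroup (V ≃ₗᵢ[ℝ] V) :=
  Subgroup.closure {w : V ≃ₗᵢ[ℝ] V | ∃ α ∈ R, ∀ x, w x = sRefl α x}

/-- The facet associated with a sign pattern `(Ip, I0, Im)` on the positive roots. -/
def facet (Ip I0 Im : Finset V) : Set V :=
  {x | (∀ α ∈ Ip, 0 < ⟪α, x⟫) ∧ (∀ α ∈ I0, ⟪α, x⟫ = 0) ∧ (∀ α ∈ Im, ⟪α, x⟫ < 0)}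

/-- `(Ip, I0, Im)` is a partition of the positive system `Rpos`. -/
def IsFacetPartition (Rpos Ip I0 Im : Finset V) : Prop :=
  ((Ip : Set V) ∪ (I0 : Set V) ∪ (Im : Set V) = (Rpos : Set V)) ∧
  Disjoint (Ip : Set V) (I0 : Set V) ∧ Disjoint (Ip : Set V) (Im : Set V) ∧
  Disjoint (I0 : Set V) (Im : Set V)

/-- The closed positive Weyl chamber. -/
def closedChamber (S : Finset V) : Set V := {x | ∀ α ∈ S, 0 ≤ ⟪α, x⟫}

/-- The face `F_α` of the Weyl chamber, supported by the wall `H_α`. -/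
def faceF (S : Finset V) (α : V) : Set V :=
  {x | ⟪α, x⟫ = 0 ∧ ∀ β ∈ S, β ≠ α → 0 < ⟪β, x⟫}

/-!
A point of `w(F_α)` lies on `H_{wα}`, and one of `±wα` is a positive root in `W·α`; finitely many
hyperplanes have a closed union. Conversely, let `y ∈ H_γ`, `γ ∈ W·α`, lie on no other root
hyperplane, and move it by some `w ∈ W` into the closed chamber. The positive root `ν = ±wγ` is a
nonnegative combination of simple roots and vanishes on `w y`, so some simple root vanishes on
`w y`, and that root can only be `ν`. Thus `ν` is a simple root in `W·α`, so `ν = α` and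
`w y ∈ F_α`. Such generic points are dense in `H_γ`.
-/

open Filter Topology
open Submodule (span mem_span_singleton)

section

variable {E : Type*} [NormedAddCommGroup E] [InnerProductSpace ℝ E] {R Rpos S : Finset E}

lemma sRefl_eq_reflection {α : E} (hα : ‖α‖ = 1) (x : E) :
    sRefl α x = (ℝ ∙ α)ᗮ.reflection x := by
  rw [Submodule.reflection_orthogonal_apply, Submodule.reflection_singleton_apply, hα, sRefl]
  module

lemma reflection_mem_weylGroup (hR : IsRootSystem R) {α : E} (hα : α ∈ R) :
    (ℝ ∙ α)ᗮ.reflection ∈ weylGroup R :=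
  Subgroup.subset_closure ⟨α, hα, fun x => (sRefl_eq_reflection (hR.1 α hα) x).symm⟩

lemma IsRootSystem.neg_mem (hR : IsRootSystem R) {β : E} (hβ : β ∈ R) : -β ∈ R := by
  simpa [sRefl_eq_reflection (hR.1 β hβ),
    Submodule.reflection_orthogonalComplement_singleton_eq_neg] using hR.2.2 β hβ β hβ

lemma IsRootSystem.sRefl_mem_iff (hR : IsRootSystem R) {α : E} (hα : α ∈ R)
    (x : E) : sRefl α x ∈ R ↔ x ∈ R := by
  refine ⟨fun h => ?_, hR.2.2 α hα x⟩
  simpa [sRefl_eq_reflection (hR.1 α hα)] using hR.2.2 α hα _ h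

lemma IsRootSystem.eq_or_eq_neg_of_mem_span_singleton (hR : IsRootSystem R)
    {γ δ : E} (hγ : γ ∈ R) (hδ : δ ∈ R) (h : δ ∈ ℝ ∙ γ) : δ = γ ∨ δ = -γ := by
  obtain ⟨t, rfl⟩ := mem_span_singleton.1 h
  rcases hR.2.1 γ hγ t hδ with rfl | rfl <;> simp

lemma weylGroup_apply_mem_iff (hR : IsRootSystem R) {w : E ≃ₗᵢ[ℝ] E}
    (hw : w ∈ weylGroup R) (x : E) : w x ∈ R ↔ x ∈ R := by
  induction hw using Subgroup.closure_induction generalizing x with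
  | mem g hg =>
    obtain ⟨α, hα, hg⟩ := hg
    rw [hg]
    exact hR.sRefl_mem_iff hα x
  | one => rfl
  | mul g g' _ _ ihg ihg' => rw [LinearIsometryEquiv.coe_mul, Function.comp_apply, ihg, ihg']
  | inv g _ ih => rw [← ih, LinearIsometryEquiv.coe_inv, LinearIsometryEquiv.apply_symm_apply]

lemma weylGroup_apply_eq_self {w : E ≃ₗᵢ[ℝ] E} (hw : w ∈ weylGroup R) {x : E}
    (hx : x ∈ (span ℝ (R : Set E))ᗮ) : w x = x := by
  induction hw using Subgroup.closure_induction with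
  | mem g hg =>
    obtain ⟨α, hα, hg⟩ := hg
    rw [hg, sRefl, Submodule.inner_right_of_mem_orthogonal (Submodule.subset_span hα) hx]
    simp
  | one => rfl
  | mul g g' _ _ ihg ihg' => rw [LinearIsometryEquiv.coe_mul, Function.comp_apply, ihg', ihg]
  | inv g _ ih => rw [LinearIsometryEquiv.coe_inv, LinearIsometryEquiv.symm_apply_eq, ih]

lemma weylGroup_ext {w w' : E ≃ₗᵢ[ℝ] E} (hw : w ∈ weylGroup R)
    (hw' : w' ∈ weylGroup R) (h : ∀ β ∈ R, w β = w' β) : w = w' := by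
  ext x
  obtain ⟨a, ha, b, hb, rfl⟩ := (span ℝ (R : Set E)).exists_add_mem_mem_orthogonal x
  have hwa : w a = w' a :=
    LinearMap.eqOn_span (f := w.toLinearEquiv.toLinearMap) (g := w'.toLinearEquiv.toLinearMap)
      h ha
  rw [map_add, map_add, hwa, weylGroup_apply_eq_self hw hb, weylGroup_apply_eq_self hw' hb]

lemma weylGroup_finite (hR : IsRootSystem R) : Finite (weylGroup R) := by
  let restrict (w : weylGroup R) (β : R) : R := ⟨w.1 β, (weylGroup_apply_mem_iff hR w.2 β).2 β.2⟩
  refine Finite.of_injective restrict fun w w' h => Subtype.ext ?_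
  exact weylGroup_ext w.2 w'.2 fun β hβ => congrArg Subtype.val (congrFun h ⟨β, hβ⟩)

lemma IsPositiveSystem.subset (hpos : IsPositiveSystem R Rpos) : Rpos ⊆ R := by
  obtain ⟨u, -, hiff⟩ := hpos
  exact fun β hβ => ((hiff β).1 hβ).1

lemma IsPositiveSystem.ne_zero (hpos : IsPositiveSystem R Rpos) {β : E}
    (hβ : β ∈ Rpos) : β ≠ 0 := by
  obtain ⟨u, -, hiff⟩ := hpos
  rintro rfl
  simpa using ((hiff 0).1 hβ).2

lemma IsPositiveSystem.neg_notMem (hpos : IsPositiveSystem R Rpos) {β : E}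
    (hβ : β ∈ Rpos) : -β ∉ Rpos := by
  obtain ⟨u, -, hiff⟩ := hpos
  intro hβ'
  have := ((hiff β).1 hβ).2
  have := ((hiff (-β)).1 hβ').2
  rw [inner_neg_left] at this
  linarith

lemma IsPositiveSystem.mem_or_neg_mem (hR : IsRootSystem R)
    (hpos : IsPositiveSystem R Rpos) {β : E} (hβ : β ∈ R) : β ∈ Rpos ∨ -β ∈ Rpos := by
  obtain ⟨u, hu, hiff⟩ := hpos
  rcases (hu β hβ).lt_or_gt with h | h
  · exact Or.inr ((hiff _).2 ⟨hR.neg_mem hβ, by rw [inner_neg_left]; linarith⟩)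
  · exact Or.inl ((hiff _).2 ⟨hβ, h⟩)

lemma IsPositiveSystem.eq_of_eq_or_eq_neg (hpos : IsPositiveSystem R Rpos)
    {δ ν : E} (hδ : δ ∈ Rpos) (hν : ν ∈ Rpos) (h : δ = ν ∨ δ = -ν) : δ = ν :=
  h.resolve_right fun h' => hpos.neg_notMem hν (h' ▸ hδ)

lemma exists_mem_closedChamber (hR : IsRootSystem R)
    (hpos : IsPositiveSystem R Rpos) (hS : S ⊆ Rpos) (x : E) :
    ∃ w ∈ weylGroup R, w x ∈ closedChamber S := by
  have hSR : S ⊆ R := hS.trans hpos.subset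
  obtain ⟨u, -, hiff⟩ := hpos
  have := weylGroup_finite hR
  obtain ⟨w, hw⟩ := Finite.exists_max fun w : weylGroup R => ⟪w.1 x, u⟫
  refine ⟨w, w.2, fun δ hδ => ?_⟩
  -- reflecting in a wall `δ` with `⟪δ, w x⟫ < 0` would increase `⟪w x, u⟫`
  have hle := hw ⟨_, mul_mem (reflection_mem_weylGroup hR (hSR hδ)) w.2⟩
  simp only [LinearIsometryEquiv.coe_mul, Function.comp_apply,
    ← sRefl_eq_reflection (hR.1 δ (hSR hδ)), sRefl, inner_sub_left, real_inner_smul_left] at hle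
  nlinarith [((hiff δ).1 (hS hδ)).2]

/-- The orbit `R_α = W·α`. -/
def weylOrbit (R : Finset E) (α : E) : Set E := {β | ∃ w ∈ weylGroup R, w α = β}

lemma weylOrbit_subset (hR : IsRootSystem R) {α : E} (hα : α ∈ R) : weylOrbit R α ⊆ R := by
  rintro _ ⟨w, hw, rfl⟩
  exact (weylGroup_apply_mem_iff hR hw α).2 hα

lemma apply_mem_weylOrbit {α β : E} {w : E ≃ₗᵢ[ℝ] E} (hw : w ∈ weylGroup R)
    (hβ : β ∈ weylOrbit R α) : w β ∈ weylOrbit R α := by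
  obtain ⟨w', hw', rfl⟩ := hβ
  exact ⟨w * w', mul_mem hw hw', rfl⟩

lemma neg_mem_weylOrbit (hR : IsRootSystem R) {α β : E} (hα : α ∈ R)
    (hβ : β ∈ weylOrbit R α) : -β ∈ weylOrbit R α := by
  simpa [Submodule.reflection_orthogonalComplement_singleton_eq_neg] using
    apply_mem_weylOrbit (reflection_mem_weylGroup hR (weylOrbit_subset hR hα hβ)) hβ

lemma exists_mem_weylOrbit_eq_or_eq_neg (hR : IsRootSystem R)
    (hpos : IsPositiveSystem R Rpos) {α β : E} (hα : α ∈ R) (hβ : β ∈ weylOrbit R α) :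
    ∃ ν ∈ Rpos, ν ∈ weylOrbit R α ∧ (ν = β ∨ ν = -β) := by
  rcases hpos.mem_or_neg_mem hR (weylOrbit_subset hR hα hβ) with h | h
  · exact ⟨β, h, hβ, Or.inl rfl⟩
  · exact ⟨-β, h, neg_mem_weylOrbit hR hα hβ, Or.inr rfl⟩

lemma exists_inner_eq_zero_of_inner_sum_eq_zero {c : E → ℝ}
    (hc : ∀ δ ∈ S, 0 ≤ c δ) {y : E} (hy : y ∈ closedChamber S)
    (hne : ∑ δ ∈ S, c δ • δ ≠ 0) (hsum : ⟪∑ δ ∈ S, c δ • δ, y⟫ = 0) :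
    ∃ δ ∈ S, ⟪δ, y⟫ = 0 := by
  obtain ⟨δ, hδ, hcδ⟩ := Finset.exists_ne_zero_of_sum_ne_zero hne
  simp only [sum_inner, real_inner_smul_left] at hsum
  have := (Finset.sum_eq_zero_iff_of_nonneg fun δ hδ => mul_nonneg (hc δ hδ) (hy δ hδ)).1 hsum δ hδ
  exact ⟨δ, hδ, (mul_eq_zero.1 this).resolve_left (left_ne_zero_of_smul hcδ)⟩

lemma IsSimpleSystem.mem_of_inner_eq_zero (hpos : IsPositiveSystem R Rpos)
    (hS : IsSimpleSystem Rpos S) {ν y : E} (hν : ν ∈ Rpos) (hy : y ∈ closedChamber S)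
    (hνy : ⟪ν, y⟫ = 0) (hgen : ∀ δ ∈ S, ⟪δ, y⟫ = 0 → δ = ν) : ν ∈ S := by
  obtain ⟨c, hc, hνc⟩ := hS.2.2.2 ν hν
  rw [hνc] at hνy
  obtain ⟨δ, hδ, hδy⟩ :=
    exists_inner_eq_zero_of_inner_sum_eq_zero hc hy (hνc ▸ hpos.ne_zero hν) hνy
  exact hgen δ hδ hδy ▸ hδ

lemma mem_faceF_of_mem_closedChamber {ν y : E} (hy : y ∈ closedChamber S)
    (hνy : ⟪ν, y⟫ = 0) (hgen : ∀ δ ∈ S, ⟪δ, y⟫ = 0 → δ = ν) : y ∈ faceF S ν :=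
  ⟨hνy, fun β hβ hne => (hy β hβ).lt_of_ne fun h => hne (hgen β hβ h.symm)⟩

/-- The set `K_α`. -/
def faceOrbit (R S : Finset E) (α : E) : Set E := ⋃ w ∈ weylGroup R, (w : E → E) '' faceF S α

lemma exists_inner_eq_zero_of_mem_faceOrbit (hR : IsRootSystem R)
    (hpos : IsPositiveSystem R Rpos) {α x : E} (hα : α ∈ R) (hx : x ∈ faceOrbit R S α) :
    ∃ γ ∈ Rpos, γ ∈ weylOrbit R α ∧ ⟪γ, x⟫ = 0 := by
  obtain ⟨w, hw, y, hy, rfl⟩ := Set.mem_iUnion₂.1 hx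
  obtain ⟨ν, hν, hνorb, hνβ⟩ := exists_mem_weylOrbit_eq_or_eq_neg hR hpos hα ⟨w, hw, rfl⟩
  have hαy : ⟪w α, w y⟫ = 0 := by rw [LinearIsometryEquiv.inner_map_map]; exact hy.1
  refine ⟨ν, hν, hνorb, ?_⟩
  rcases hνβ with rfl | rfl <;> simp [hαy]

lemma mem_faceOrbit_of_generic (hR : IsRootSystem R) (hpos : IsPositiveSystem R Rpos)
    (hS : IsSimpleSystem Rpos S) {α : E} (hα : α ∈ S)
    (horbit : ∀ β ∈ S, β ∈ weylOrbit R α → β = α) {γ y : E} (hγ : γ ∈ weylOrbit R α)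
    (hγy : ⟪γ, y⟫ = 0) (hgen : ∀ δ ∈ R, ⟪δ, y⟫ = 0 → δ ∈ ℝ ∙ γ) : y ∈ faceOrbit R S α := by
  have hαR := hpos.subset (hS.1 hα)
  obtain ⟨w, hw, hwy⟩ := exists_mem_closedChamber hR hpos hS.1 y
  have hβ : w γ ∈ weylOrbit R α := apply_mem_weylOrbit hw hγ
  obtain ⟨ν, hν, hνorb, hνβ⟩ := exists_mem_weylOrbit_eq_or_eq_neg hR hpos hαR hβ
  have hβy : ⟪w γ, w y⟫ = 0 := by rw [LinearIsometryEquiv.inner_map_map]; exact hγy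
  have hνy : ⟪ν, w y⟫ = 0 := by rcases hνβ with rfl | rfl <;> simp [hβy]
  have hgen' : ∀ δ ∈ S, ⟪δ, w y⟫ = 0 → δ = ν := by
    intro δ hδ hδy
    have hδR := hpos.subset (hS.1 hδ)
    have hδγ : w.symm δ ∈ ℝ ∙ γ := by
      refine hgen _ ((weylGroup_apply_mem_iff hR (inv_mem hw) δ).2 hδR) ?_
      rwa [← LinearIsometryEquiv.inner_map_map w, w.apply_symm_apply]
    obtain ⟨t, ht⟩ := mem_span_singleton.1 hδγ
    have hδβ : δ ∈ ℝ ∙ w γ := mem_span_singleton.2 ⟨t, by rw [← map_smul, ht, w.apply_symm_apply]⟩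
    have := hR.eq_or_eq_neg_of_mem_span_singleton (weylOrbit_subset hR hαR hβ) hδR hδβ
    refine hpos.eq_of_eq_or_eq_neg (hS.1 hδ) hν ?_
    rcases hνβ with rfl | rfl
    · exact this
    · simpa [or_comm] using this
  obtain rfl := horbit ν (hS.mem_of_inner_eq_zero hpos hν hwy hνy hgen') hνorb
  exact Set.mem_biUnion (inv_mem hw)
    ⟨w y, mem_faceF_of_mem_closedChamber hwy hνy hgen', w.symm_apply_apply y⟩

lemma exists_mem_orthogonal_forall_inner_ne_zero (K : Submodule ℝ E)
    [K.HasOrthogonalProjection] {s : Set E} (hs : s.Finite) (hsK : ∀ δ ∈ s, δ ∉ K) :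
    ∃ v ∈ Kᗮ, ∀ δ ∈ s, ⟪δ, v⟫ ≠ 0 := by
  have := hs.to_subtype
  by_contra! h
  have hcover :
      ⋃ δ : s, (LinearMap.ker ((innerₛₗ ℝ (δ : E)).comp Kᗮ.subtype) : Set Kᗮ) = Set.univ := by
    refine Set.eq_univ_of_forall fun v => ?_
    obtain ⟨δ, hδ, hδv⟩ := h v v.2
    exact Set.mem_iUnion.2 ⟨⟨δ, hδ⟩, by simpa using hδv⟩
  obtain ⟨δ, hδ⟩ := Subspace.exists_eq_top_of_iUnion_eq_univ hcover
  refine hsK δ δ.2 ?_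
  rw [← K.orthogonal_orthogonal, Submodule.mem_orthogonal]
  intro v hv
  have : (⟨v, hv⟩ : Kᗮ) ∈ LinearMap.ker ((innerₛₗ ℝ (δ : E)).comp Kᗮ.subtype) :=
    hδ ▸ Submodule.mem_top
  simpa [real_inner_comm] using this

lemma eventually_inner_add_smul_ne_zero {δ v : E} (hv : ⟪δ, v⟫ ≠ 0) (x : E) :
    ∀ᶠ t in 𝓝[≠] (0 : ℝ), ⟪δ, x + t • v⟫ ≠ 0 := by
  refine nhdsNE_le_cofinite 0 (eventually_cofinite.2 (Set.Subsingleton.finite ?_))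
  intro t ht t' ht'
  replace ht := not_not.1 ht
  replace ht' := not_not.1 ht'
  rw [inner_add_right, real_inner_smul_right] at ht ht'
  exact mul_right_cancel₀ hv (by linarith)

lemma mem_closure_faceOrbit (hR : IsRootSystem R) (hpos : IsPositiveSystem R Rpos)
    (hS : IsSimpleSystem Rpos S) {α : E} (hα : α ∈ S)
    (horbit : ∀ β ∈ S, β ∈ weylOrbit R α → β = α) {γ x : E} (hγ : γ ∈ weylOrbit R α)
    (hx : ⟪γ, x⟫ = 0) : x ∈ closure (faceOrbit R S α) := by
  obtain ⟨v, hv, hvgen⟩ := exists_mem_orthogonal_forall_inner_ne_zero (ℝ ∙ γ)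
    (s := {δ ∈ R | δ ∉ ℝ ∙ γ}) (R.finite_toSet.subset fun δ hδ => hδ.1) fun δ hδ => hδ.2
  -- `x + t • v` stays on `H_γ` and, for small `t ≠ 0`, lies on no other root hyperplane
  have hline : Tendsto (fun t : ℝ => x + t • v) (𝓝[≠] 0) (𝓝 x) :=
    tendsto_nhdsWithin_of_tendsto_nhds <|
      (by fun_prop : Continuous fun t : ℝ => x + t • v).tendsto' 0 x (by simp)
  have hgen : ∀ᶠ t in 𝓝[≠] (0 : ℝ), ∀ δ ∈ R, ⟪δ, x + t • v⟫ = 0 → δ ∈ ℝ ∙ γ := by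
    refine (eventually_all_finset R).2 fun δ hδ => ?_
    by_cases hδγ : δ ∈ ℝ ∙ γ
    · exact Eventually.of_forall fun _ _ => hδγ
    · exact (eventually_inner_add_smul_ne_zero (hvgen δ ⟨hδ, hδγ⟩) x).mono
        fun t ht h => absurd h ht
  refine mem_closure_of_tendsto hline (hgen.mono fun t ht => ?_)
  refine mem_faceOrbit_of_generic hR hpos hS hα horbit hγ ?_ ht
  simp [inner_add_right, real_inner_smul_right, hx,
    Submodule.mem_orthogonal_singleton_iff_inner_right.1 hv]

end

/-- if the simple root `α` is the only simple root in its `W`-orbit,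
then the closure of `K_α = ∪_{w ∈ W} w(F_α)` is the union of the hyperplanes `H_γ`
over the positive roots `γ` in the orbit of `α`. -/
theorem closure_K_eq_union_hyperplanes (R Rpos S : Finset V) (hR : IsRootSystem R)
    (hpos : IsPositiveSystem R Rpos) (hS : IsSimpleSystem Rpos S)
    (α : V) (hα : α ∈ S)
    (horbit : ∀ β ∈ S, (∃ w ∈ weylGroup R, w α = β) → β = α) :
    closure (⋃ w ∈ weylGroup R, (w : V → V) '' faceF S α) =
      ⋃ γ ∈ {γ : V | γ ∈ Rpos ∧ ∃ w ∈ weylGroup R, w α = γ},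
        {x : V | ⟪γ, x⟫ = 0} := by
  have hαR := hpos.subset (hS.1 hα)
  refine (closure_minimal (fun x hx => ?_) ?_).antisymm fun x hx => ?_
  · obtain ⟨γ, hγ, hγorb, hγx⟩ := exists_inner_eq_zero_of_mem_faceOrbit hR hpos hαR hx
    exact Set.mem_biUnion ⟨hγ, hγorb⟩ hγx
  · refine (Rpos.finite_toSet.subset fun γ hγ => hγ.1).isClosed_biUnion fun γ _ => ?_
    exact isClosed_eq (continuous_const.inner continuous_id) continuous_const
  · obtain ⟨γ, ⟨-, hγorb⟩, hγx⟩ := Set.mem_iUnion₂.1 hx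
    exact mem_closure_faceOrbit hR hpos hS hα horbit hγorb hγx
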